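/- Let (A_n)_{n∈ℕ} be an inverse system of abelian groups. If the system satisfies the Mittag-Leffler condition (e.g. all transition maps are surjective, or eventually the images stabilize), then lim¹ A_n = 0. -/
import Mathlib
set_option linter.unusedSectionVars false


namespace Stmt6

variable {A : ℕ → Type*} [∀ n, AddCommGroup (A n)]

/-- The map `(a_n) ↦ (a_n - f_n (a_{n+1}))` whose cokernel is `lim¹`. -/
def seqShift (f : ∀ n, A (n + 1) →+ A n) : (∀ n, A n) →+ (∀ n, A n) :=
  AddMonoidHom.mk' (fun a n => a n - f n (a (n + 1))) (by
    intro a b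
    funext n
    simp only [Pi.add_apply, map_add]
    abel)

/-- `lim¹` of a sequential inverse system of abelian groups, defined as the cokernel of
`seqShift`. -/
abbrev seqLim1 (f : ∀ n, A (n + 1) →+ A n) : Type _ :=
  (∀ n, A n) ⧸ (seqShift f).range

/-- The composite transition map `A (n + m) →+ A n`. -/
def trans (f : ∀ n, A (n + 1) →+ A n) (n : ℕ) : ∀ m, A (n + m) →+ A n
  | 0 => AddMonoidHom.id _
  | (m + 1) => (trans f n m).comp (f (n + m))

lemma cast_pi (b : ∀ n, A n) {i j : ℕ} (e : i = j) : cast (congrArg A e) (b i) = b j := by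
  subst e; rfl

lemma cast_f (f : ∀ n, A (n + 1) →+ A n) {i j : ℕ} (e : i = j) (x : A (i+1)) :
    f j (cast (show A (i+1) = A (j+1) by rw [e]) x) = cast (congrArg A e) (f i x) := by
  subst e; rfl

lemma trans_shift (f : ∀ n, A (n + 1) →+ A n) :
    ∀ m n (x : A (n+1+m)), f n (trans f (n+1) m x) =
      trans f n (m+1) (cast (congrArg A (by omega : n+1+m = n+(m+1))) x) := by
  intro m
  induction m with
  | zero => intro n x; rfl
  | succ m ih =>
    intro n x
    have h1 : trans f (n+1) (m+1) x = trans f (n+1) m (f (n+1+m) x) := rfl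
    rw [h1, ih n (f (n+1+m) x)]
    have h2 : ∀ y : A (n+(m+1)+1), trans f n (m+1+1) y = trans f n (m+1) (f (n+(m+1)) y) := fun _ => rfl
    rw [h2]
    congr 1
    rw [cast_f f (show n+1+m = n+(m+1) by omega)]

lemma trans_shift_pi (f : ∀ n, A (n + 1) →+ A n) (b : ∀ n, A n) (n k : ℕ) :
    f n (trans f (n+1) k (b (n+1+k))) = trans f n (k+1) (b (n+(k+1))) := by
  rw [trans_shift]
  exact congrArg _ (cast_pi b (by omega))

lemma surj_step (f : ∀ n, A (n + 1) →+ A n) (m₀ : ℕ → ℕ)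
    (hm₀ : ∀ n, ∀ m ≥ m₀ n, (trans f n m).range = (trans f n (m₀ n)).range)
    (n : ℕ) (y : A n) (hy : y ∈ (trans f n (m₀ n)).range) :
    ∃ z, z ∈ (trans f (n+1) (m₀ (n+1))).range ∧ f n z = y := by
  set M := max (m₀ n) (m₀ (n+1)) with hM
  rw [← hm₀ n (M+1) (by omega)] at hy
  obtain ⟨x, hx⟩ := hy
  refine ⟨trans f (n+1) M (cast (congrArg A (by omega : n+(M+1) = n+1+M)) x), ?_, ?_⟩
  · rw [← hm₀ (n+1) M (le_max_right _ _)]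
    exact ⟨_, rfl⟩
  · rw [trans_shift]
    rw [show (cast (congrArg A (by omega : n+1+M = n+(M+1)))
      (cast (congrArg A (by omega : n+(M+1) = n+1+M)) x)) = x from by
        rw [cast_cast]; exact cast_eq _ x]
    exact hx

noncomputable def chain (f : ∀ n, A (n + 1) →+ A n) (B : ∀ n, AddSubgroup (A n))
    (b' : ∀ n, A n) (hb' : ∀ n, b' n ∈ B n)
    (step : ∀ n (y : A n), y ∈ B n → ∃ z, z ∈ B (n+1) ∧ f n z = y) :
    ∀ n, {x : A n // x ∈ B n}
  | 0 => ⟨0, zero_mem _⟩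
  | (n+1) =>
    ⟨(step n ((chain f B b' hb' step n).1 - b' n)
        (sub_mem (chain f B b' hb' step n).2 (hb' n))).choose,
     (step n ((chain f B b' hb' step n).1 - b' n)
        (sub_mem (chain f B b' hb' step n).2 (hb' n))).choose_spec.1⟩

lemma chain_spec (f : ∀ n, A (n + 1) →+ A n) (B : ∀ n, AddSubgroup (A n))
    (b' : ∀ n, A n) (hb' : ∀ n, b' n ∈ B n)
    (step : ∀ n (y : A n), y ∈ B n → ∃ z, z ∈ B (n+1) ∧ f n z = y) (n : ℕ) :
    f n (chain f B b' hb' step (n+1)).1 = (chain f B b' hb' step n).1 - b' n := by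
  exact (step n ((chain f B b' hb' step n).1 - b' n)
        (sub_mem (chain f B b' hb' step n).2 (hb' n))).choose_spec.2


/-- If an inverse system of abelian groups `(A_n)` satisfies the Mittag-Leffler condition
(for each `n` the decreasing sequence of images of `A_{n+m} → A_n` stabilizes), then
`lim¹ A_n = 0`. -/
theorem stmt6 (f : ∀ n, A (n + 1) →+ A n)
    (hML : ∀ n, ∃ m₀, ∀ m ≥ m₀, (trans f n m).range = (trans f n m₀).range) :
    ∀ x : seqLim1 f, x = 0 := by
  choose m₀ hm₀ using hML
  set B : ∀ n, AddSubgroup (A n) := fun n => (trans f n (m₀ n)).range with hB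
  -- reduce to surjectivity of seqShift onto each coset representative
  suffices h : ∀ b : ∀ n, A n, b ∈ (seqShift f).range by
    intro x
    refine QuotientAddGroup.induction_on x (fun b => ?_)
    rw [QuotientAddGroup.eq_zero_iff]
    exact h b
  intro b
  set K : ℕ → ℕ := fun n => (Finset.range (n+1)).sup m₀ + 1 with hKdef
  have hKm : ∀ n, m₀ n < K n := fun n =>
    Nat.lt_succ_of_le (Finset.le_sup (Finset.self_mem_range_succ n))
  have hKmono : ∀ n, K n ≤ K (n+1) := fun n =>
    Nat.succ_le_succ (Finset.sup_mono (Finset.range_subset_range.mpr (by omega)))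
  set a' : ∀ n, A n := fun n => ∑ k ∈ Finset.range (K n), trans f n k (b (n+k)) with ha'
  have key : ∀ n, b n - (a' n - f n (a' (n+1))) ∈ B n := by
    intro n
    have h1 : f n (a' (n+1)) = ∑ k ∈ Finset.range (K (n+1)), trans f n (k+1) (b (n+k+1)) := by
      show f n (∑ k ∈ Finset.range (K (n+1)), trans f (n+1) k (b (n+1+k))) = _
      rw [map_sum]
      exact Finset.sum_congr rfl fun k _ => trans_shift_pi f b n k
    have h2 : (∑ k ∈ Finset.range (K (n+1)), trans f n (k+1) (b (n+k+1)))
        = ∑ j ∈ Finset.Ico 1 (K (n+1)+1), trans f n j (b (n+j)) := by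
      rw [Finset.sum_Ico_eq_sum_range]
      simp only [Nat.add_sub_cancel]
      exact Finset.sum_congr rfl fun k _ => by rw [Nat.add_comm 1 k]; rfl
    have h3 : a' n = b n + ∑ j ∈ Finset.Ico 1 (K n), trans f n j (b (n+j)) := by
      show (∑ k ∈ Finset.range (K n), trans f n k (b (n+k))) = _
      rw [Finset.range_eq_Ico, Finset.sum_eq_sum_Ico_succ_bot (Nat.succ_pos _ : 0 < K n)]
      rfl
    have h4 : (∑ j ∈ Finset.Ico 1 (K (n+1)+1), trans f n j (b (n+j)))
        = (∑ j ∈ Finset.Ico 1 (K n), trans f n j (b (n+j)))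
          + ∑ j ∈ Finset.Ico (K n) (K (n+1)+1), trans f n j (b (n+j)) := by
      rw [Finset.sum_Ico_consecutive _ (Nat.succ_pos _ : 1 ≤ K n) (le_trans (hKmono n) (Nat.le_succ _))]
    rw [h1, h2, h3, h4]
    rw [show b n - (b n + (∑ j ∈ Finset.Ico 1 (K n), trans f n j (b (n + j)))
        - ((∑ j ∈ Finset.Ico 1 (K n), trans f n j (b (n + j)))
          + ∑ j ∈ Finset.Ico (K n) (K (n+1)+1), trans f n j (b (n+j))))
        = ∑ j ∈ Finset.Ico (K n) (K (n+1)+1), trans f n j (b (n+j)) from by abel]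
    refine sum_mem fun j hj => ?_
    rw [Finset.mem_Ico] at hj
    show (trans f n j) (b (n+j)) ∈ (trans f n (m₀ n)).range
    rw [← hm₀ n j (by have := hKm n; omega)]
    exact ⟨_, rfl⟩
  set b' : ∀ n, A n := fun n => b n - (a' n - f n (a' (n+1))) with hb'def
  have hb' : ∀ n, b' n ∈ B n := key
  have step := surj_step f m₀ hm₀
  set g := chain f B b' hb' step with hg
  refine ⟨a' + fun n => (g n).1, ?_⟩
  funext n
  show (a' n + (g n).1) - f n (a' (n+1) + (g (n+1)).1) = b n
  rw [map_add, chain_spec]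
  show a' n + (g n).1 - (f n (a' (n+1)) + ((g n).1 - b' n)) = b n
  rw [show b' n = b n - (a' n - f n (a' (n+1))) from rfl]
  abel


end Stmt6
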